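/- Fix an integer N ≥ 2 and consider the polynomial ring ℂ[x_2,…,x_N, y_2,…,y_N] in 2(N−1) variables. Let (P_{ab}) be the antisymmetric family of polynomials determined by: P(x_i,x_j) = (1/2)x_i x_j for i < j; P(y_i,y_j) = −(1/2)y_i y_j for i < j; P(x_i,y_j) = (1/2)x_i y_j for i ≠ j; and P(x_i,y_i) = −Σ_{l=i+1}^{N} x_l y_l for all i. Then the associated bracket {f,g} = Σ_{a,b} P_{ab}·(∂f/∂x_a)·(∂g/∂x_b) satisfies the Jacobi identity for all polynomials f, g, h, i.e. it is a Poisson bracket. (This is the Poisson structure of §5.6(a) of the paper, from the D-type quadric; it is the quasiclassical limit of even-dimensional quantum Euclidean space.) -/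

import Mathlib

/-!
The bracket is a biderivation, so for antisymmetric `P` its Jacobiator is a derivation in each
argument, and the Jacobi identity only has to be checked on triples of generators. Triples whose
pairwise brackets are log-canonical, `{u, v} = λ u v`, satisfy it for any antisymmetric `λ`. Up to
order, the remaining triples are `x_i, x_j, y_j` and `x_i, y_i, y_k`, which involve
`{x_i, y_i} = -r_i` with `r_i = Σ_{l>i} x_l y_l`; for these one uses
`{x_i, r_j} = [i ≤ j] x_i r_j` and `{y_k, r_j} = -[k ≤ j] y_k r_j`.
-/

open MvPolynomial

/-- The bracket on a multivariate polynomial ring associated to a family of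
polynomials `P a b`: `{f, g} = Σ_{a,b} P a b · ∂f/∂x_a · ∂g/∂x_b`. -/
noncomputable def polyBracket {σ : Type*} [Fintype σ]
    (P : σ → σ → MvPolynomial σ ℂ) (f g : MvPolynomial σ ℂ) : MvPolynomial σ ℂ :=
  ∑ a : σ, ∑ b : σ, P a b * pderiv a f * pderiv b g

namespace StmtD

/-- Index set for the variables `x_2, …, x_N, y_2, …, y_N` (with `m = N - 1`):
`Sum.inl i` is `x_{i+2}` and `Sum.inr i` is `y_{i+2}`. -/
abbrev Idx (m : ℕ) := Fin m ⊕ Fin m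

variable {m : ℕ}

noncomputable def x (i : Fin m) : MvPolynomial (Idx m) ℂ := X (Sum.inl i)

noncomputable def y (i : Fin m) : MvPolynomial (Idx m) ℂ := X (Sum.inr i)

/-- `sg i j` is the sign of `j - i`. -/
def sg (i j : Fin m) : ℂ := if i < j then 1 else if j < i then -1 else 0

/-- The antisymmetric family of polynomials determined by:
`P(x_i,x_j) = (1/2)x_i x_j` for `i < j`; `P(y_i,y_j) = -(1/2)y_i y_j` for `i < j`;
`P(x_i,y_j) = (1/2)x_i y_j` for `i ≠ j`; and `P(x_i,y_i) = -Σ_{l>i} x_l y_l`. -/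
noncomputable def P : Idx m → Idx m → MvPolynomial (Idx m) ℂ
  | Sum.inl i, Sum.inl j => C (sg i j * (1/2)) * x i * x j
  | Sum.inr i, Sum.inr j => -(C (sg i j * (1/2)) * y i * y j)
  | Sum.inl i, Sum.inr j =>
      if i = j then -(∑ l ∈ Finset.Ioi i, x l * y l)
      else C (1/2) * x i * y j
  | Sum.inr j, Sum.inl i =>
      -(if i = j then -(∑ l ∈ Finset.Ioi i, x l * y l)
        else C (1/2) * x i * y j)

end StmtD

theorem Finset.sum_Ioi_ite_lt {α M : Type*} [LinearOrder α] [LocallyFiniteOrderTop α]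
    [AddCommMonoid M] (i j : α) (f : α → M) :
    ∑ l ∈ Finset.Ioi j, (if i < l then f l else 0) = ∑ l ∈ Finset.Ioi (max i j), f l := by
  rw [← Finset.sum_filter]
  congr 1
  ext l
  simp [and_comm]

section Bracket

variable {σ : Type*} [Fintype σ] (P : σ → σ → MvPolynomial σ ℂ)

theorem polyBracket_add_right (f g h : MvPolynomial σ ℂ) :
    polyBracket P f (g + h) = polyBracket P f g + polyBracket P f h := by
  simp [polyBracket, mul_add, Finset.sum_add_distrib]

theorem polyBracket_add_left (f g h : MvPolynomial σ ℂ) :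
    polyBracket P (f + g) h = polyBracket P f h + polyBracket P g h := by
  simp [polyBracket, mul_add, add_mul, Finset.sum_add_distrib]

theorem polyBracket_neg_right (f g : MvPolynomial σ ℂ) :
    polyBracket P f (-g) = -polyBracket P f g := by
  simp [polyBracket]

theorem polyBracket_sum_right {ι : Type*} (s : Finset ι) (f : MvPolynomial σ ℂ)
    (g : ι → MvPolynomial σ ℂ) :
    polyBracket P f (∑ i ∈ s, g i) = ∑ i ∈ s, polyBracket P f (g i) := by
  simp only [polyBracket, map_sum, Finset.mul_sum]
  simp_rw [Finset.sum_comm (s := (Finset.univ : Finset σ)) (t := s)]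

theorem polyBracket_zero_right (f : MvPolynomial σ ℂ) : polyBracket P f 0 = 0 := by
  simp [polyBracket]

theorem polyBracket_C_right (f : MvPolynomial σ ℂ) (c : ℂ) : polyBracket P f (C c) = 0 := by
  simp [polyBracket]

theorem polyBracket_C_left (f : MvPolynomial σ ℂ) (c : ℂ) : polyBracket P (C c) f = 0 := by
  simp [polyBracket]

theorem polyBracket_mul_right (f g h : MvPolynomial σ ℂ) :
    polyBracket P f (g * h) = g * polyBracket P f h + h * polyBracket P f g := by
  simp only [polyBracket, Derivation.leibniz, smul_eq_mul, Finset.mul_sum,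
    ← Finset.sum_add_distrib]
  exact Finset.sum_congr rfl fun _ _ => Finset.sum_congr rfl fun _ _ => by ring

theorem polyBracket_X_X (a b : σ) : polyBracket P (X a) (X b) = P a b := by
  classical
  simp [polyBracket, pderiv_X, Pi.single_apply]

variable {P}

theorem polyBracket_swap (hP : ∀ a b, P b a = -P a b) (f g : MvPolynomial σ ℂ) :
    polyBracket P g f = -polyBracket P f g := by
  rw [polyBracket, Finset.sum_comm, polyBracket, ← Finset.sum_neg_distrib]
  refine Finset.sum_congr rfl fun a _ => ?_
  rw [← Finset.sum_neg_distrib]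
  exact Finset.sum_congr rfl fun b _ => by rw [hP]; ring

theorem polyBracket_self (hP : ∀ a b, P b a = -P a b) (f : MvPolynomial σ ℂ) :
    polyBracket P f f = 0 :=
  CharZero.eq_neg_self_iff.mp (polyBracket_swap hP f f)

variable (P) in
noncomputable def jacobiator (f g h : MvPolynomial σ ℂ) : MvPolynomial σ ℂ :=
  polyBracket P f (polyBracket P g h) + polyBracket P g (polyBracket P h f) +
    polyBracket P h (polyBracket P f g)

theorem jacobiator_rotate (f g h : MvPolynomial σ ℂ) :
    jacobiator P f g h = jacobiator P g h f := by
  simp only [jacobiator]; ring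

theorem jacobiator_swap (hP : ∀ a b, P b a = -P a b) (f g h : MvPolynomial σ ℂ) :
    jacobiator P g f h = -jacobiator P f g h := by
  simp only [jacobiator]
  rw [polyBracket_swap hP f g, polyBracket_swap hP h f, polyBracket_swap hP g h]
  simp only [polyBracket_neg_right]
  ring

theorem jacobiator_self_left (hP : ∀ a b, P b a = -P a b) (f h : MvPolynomial σ ℂ) :
    jacobiator P f f h = 0 := by
  rw [jacobiator, polyBracket_swap hP f h, polyBracket_self hP, polyBracket_neg_right,
    polyBracket_zero_right]
  ring

theorem jacobiator_add_right (f g h h' : MvPolynomial σ ℂ) :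
    jacobiator P f g (h + h') = jacobiator P f g h + jacobiator P f g h' := by
  simp only [jacobiator, polyBracket_add_right, polyBracket_add_left]; ring

theorem jacobiator_C_right (f g : MvPolynomial σ ℂ) (c : ℂ) : jacobiator P f g (C c) = 0 := by
  simp [jacobiator, polyBracket_C_right, polyBracket_C_left, polyBracket_zero_right]

theorem jacobiator_mul_right (hP : ∀ a b, P b a = -P a b) (f g p q : MvPolynomial σ ℂ) :
    jacobiator P f g (p * q) = p * jacobiator P f g q + q * jacobiator P f g p := by
  have hswap := fun u v => polyBracket_swap hP (P := P) v u
  simp only [jacobiator]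
  rw [hswap (p * q) f, hswap (p * q) (polyBracket P f g)]
  simp only [polyBracket_neg_right, polyBracket_mul_right, polyBracket_add_right]
  rw [hswap (polyBracket P f g) q, hswap (polyBracket P f g) p, hswap q f, hswap p f]
  simp only [polyBracket_neg_right]
  ring

theorem jacobiator_eq_zero_of_X_right (hP : ∀ a b, P b a = -P a b) {f g : MvPolynomial σ ℂ}
    (hX : ∀ c, jacobiator P f g (X c) = 0) (h : MvPolynomial σ ℂ) :
    jacobiator P f g h = 0 := by
  induction h using MvPolynomial.induction_on with
  | C c => exact jacobiator_C_right f g c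
  | add p q hp hq => rw [jacobiator_add_right, hp, hq, add_zero]
  | mul_X p c hp => rw [jacobiator_mul_right hP, hp, hX, mul_zero, mul_zero, add_zero]

theorem jacobiator_eq_zero_of_X (hP : ∀ a b, P b a = -P a b)
    (hX : ∀ a b c, jacobiator P (X a) (X b) (X c) = 0) (f g h : MvPolynomial σ ℂ) :
    jacobiator P f g h = 0 := by
  have hXX (a b : σ) (h) : jacobiator P (X a) (X b) h = 0 :=
    jacobiator_eq_zero_of_X_right hP (hX a b) h
  have hX_left (a : σ) (g h) : jacobiator P (X a) g h = 0 :=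
    jacobiator_eq_zero_of_X_right hP (fun c => by rw [← jacobiator_rotate]; exact hXX c a g) h
  exact jacobiator_eq_zero_of_X_right hP
    (fun c => by rw [← jacobiator_rotate]; exact hX_left c f g) h

theorem jacobiator_eq_zero_of_log_canonical (hP : ∀ a b, P b a = -P a b)
    {f g h : MvPolynomial σ ℂ} (α β γ : ℂ) (hfg : polyBracket P f g = C α * f * g)
    (hgh : polyBracket P g h = C β * g * h) (hhf : polyBracket P h f = C γ * h * f) :
    jacobiator P f g h = 0 := by
  have hgf := polyBracket_swap hP f g
  have hhg := polyBracket_swap hP g h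
  have hfh := polyBracket_swap hP h f
  rw [jacobiator, hfg, hgh, hhf]
  simp only [polyBracket_mul_right, polyBracket_C_right, hfg, hgh, hhf, hgf, hhg, hfh]
  ring

end Bracket

namespace StmtD

variable {m : ℕ}

theorem sg_swap (i j : Fin m) : sg j i = -sg i j := by
  unfold sg
  rcases lt_trichotomy i j with h | rfl | h
  · simp [h, h.not_gt]
  · simp
  · simp [h, h.not_gt]

theorem P_swap (a b : Idx m) : P b a = -P a b := by
  rcases a with i | i <;> rcases b with j | j
  · simp only [P, sg_swap j i, neg_mul, map_neg]; ring
  · rfl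
  · exact (neg_neg _).symm
  · simp only [P, sg_swap j i, neg_mul, map_neg]; ring

noncomputable def r (i : Fin m) : MvPolynomial (Idx m) ℂ := ∑ l ∈ Finset.Ioi i, x l * y l

theorem C_half_add_C_half : (C (1/2 : ℂ) : MvPolynomial (Idx m) ℂ) + C (1/2) = 1 := by
  rw [← map_add]; norm_num

theorem C_sg_mul_half_of_lt {i j : Fin m} (h : i < j) :
    (C (sg i j * (1/2)) : MvPolynomial (Idx m) ℂ) = C (1/2) := by
  simp [sg, h]

theorem C_sg_mul_half_of_gt {i j : Fin m} (h : j < i) :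
    (C (sg i j * (1/2)) : MvPolynomial (Idx m) ℂ) = -C (1/2) := by
  simp [sg, h, h.not_gt]

theorem bracket_x_x (i j : Fin m) :
    polyBracket P (x i) (x j) = C (sg i j * (1/2)) * x i * x j :=
  polyBracket_X_X P _ _

theorem bracket_y_y (i j : Fin m) :
    polyBracket P (y i) (y j) = C (-(sg i j * (1/2))) * y i * y j :=
  (polyBracket_X_X P (Sum.inr i) (Sum.inr j)).trans <| by rw [P, map_neg]; ring

theorem bracket_x_y_self (i : Fin m) : polyBracket P (x i) (y i) = -r i :=
  (polyBracket_X_X P (Sum.inl i) (Sum.inr i)).trans <| by simp [P, r]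

theorem bracket_y_x_self (i : Fin m) : polyBracket P (y i) (x i) = r i :=
  (polyBracket_X_X P (Sum.inr i) (Sum.inl i)).trans <| by simp [P, r]

theorem bracket_x_y_of_ne {i j : Fin m} (h : i ≠ j) :
    polyBracket P (x i) (y j) = C (1/2) * x i * y j :=
  (polyBracket_X_X P (Sum.inl i) (Sum.inr j)).trans <| by simp [P, h]

theorem bracket_y_x_of_ne {i j : Fin m} (h : i ≠ j) :
    polyBracket P (y j) (x i) = C (-(1/2)) * y j * x i :=
  (polyBracket_X_X P (Sum.inr j) (Sum.inl i)).trans <| by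
    simp only [P, h, if_false, map_neg]; ring

theorem bracket_x_x_mul_y (i l : Fin m) :
    polyBracket P (x i) (x l * y l) =
      (if i < l then x i * (x l * y l) else 0) - if l = i then x i * r i else 0 := by
  rw [polyBracket_mul_right]
  rcases lt_trichotomy i l with h | rfl | h
  · rw [bracket_x_y_of_ne h.ne, bracket_x_x, C_sg_mul_half_of_lt h, if_pos h, if_neg h.ne']
    linear_combination (x i * x l * y l) * C_half_add_C_half
  · simp [bracket_x_y_self, bracket_x_x, sg]
  · rw [bracket_x_y_of_ne h.ne', bracket_x_x, C_sg_mul_half_of_gt h, if_neg h.not_gt,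
      if_neg h.ne]
    ring

theorem bracket_y_x_mul_y (k l : Fin m) :
    polyBracket P (y k) (x l * y l) =
      (if l = k then y k * r k else 0) - if k < l then y k * (x l * y l) else 0 := by
  rw [polyBracket_mul_right, bracket_y_y, map_neg]
  rcases lt_trichotomy k l with h | rfl | h
  · rw [bracket_y_x_of_ne h.ne', C_sg_mul_half_of_lt h, if_pos h, if_neg h.ne']
    simp only [map_neg]
    linear_combination (-(x l * y k * y l)) * C_half_add_C_half
  · simp [bracket_y_x_self, sg]
  · rw [bracket_y_x_of_ne h.ne, C_sg_mul_half_of_gt h, if_neg h.not_gt, if_neg h.ne, neg_neg,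
      map_neg]
    ring

theorem bracket_x_r (i j : Fin m) :
    polyBracket P (x i) (r j) = if i ≤ j then x i * r j else 0 := by
  rw [r, polyBracket_sum_right]
  simp only [bracket_x_x_mul_y, Finset.sum_sub_distrib, Finset.sum_ite_eq', Finset.mem_Ioi,
    Finset.sum_Ioi_ite_lt, ← Finset.mul_sum]
  rcases le_or_gt i j with h | h
  · rw [max_eq_right h, if_neg h.not_gt, if_pos h, sub_zero]
  · rw [max_eq_left h.le, if_pos h, if_neg h.not_ge, r, sub_self]

theorem bracket_y_r (k j : Fin m) :
    polyBracket P (y k) (r j) = if k ≤ j then -(y k * r j) else 0 := by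
  rw [r, polyBracket_sum_right]
  simp only [bracket_y_x_mul_y, Finset.sum_sub_distrib, Finset.sum_ite_eq', Finset.mem_Ioi,
    Finset.sum_Ioi_ite_lt, ← Finset.mul_sum]
  rcases le_or_gt k j with h | h
  · rw [max_eq_right h, if_neg h.not_gt, if_pos h, zero_sub]
  · rw [max_eq_left h.le, if_pos h, if_neg h.not_ge, r, sub_self]

theorem jacobiator_x_x_y_self {i j : Fin m} (hij : i ≠ j) :
    jacobiator P (x i) (x j) (y j) = 0 := by
  rw [jacobiator, bracket_x_y_self, bracket_y_x_of_ne hij, bracket_x_x, polyBracket_neg_right,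
    bracket_x_r]
  simp only [polyBracket_mul_right, polyBracket_C_right, bracket_x_x, bracket_x_y_self,
    bracket_y_x_self, bracket_y_x_of_ne hij, mul_zero, add_zero]
  rcases hij.lt_or_gt with h | h
  · simp only [C_sg_mul_half_of_lt h, C_sg_mul_half_of_gt h, map_neg, if_pos h.le]
    linear_combination (x i * r j) * C_half_add_C_half
  · simp only [C_sg_mul_half_of_lt h, C_sg_mul_half_of_gt h, map_neg, if_neg h.not_ge]
    ring

theorem jacobiator_x_y_self_y {i k : Fin m} (hik : i ≠ k) :
    jacobiator P (x i) (y i) (y k) = 0 := by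
  rw [jacobiator, bracket_y_y, bracket_y_x_of_ne hik, bracket_x_y_self, polyBracket_neg_right,
    bracket_y_r]
  simp only [polyBracket_mul_right, polyBracket_C_right, bracket_y_y, bracket_x_y_self,
    bracket_y_x_self, bracket_x_y_of_ne hik, mul_zero, add_zero]
  rcases hik.lt_or_gt with h | h
  · simp only [C_sg_mul_half_of_lt h, map_neg, if_neg h.not_ge]
    ring
  · simp only [C_sg_mul_half_of_gt h, map_neg, if_pos h.le]
    linear_combination (-(y k * r i)) * C_half_add_C_half

theorem jacobiator_x_x_x (i j k : Fin m) : jacobiator P (x i) (x j) (x k) = 0 :=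
  jacobiator_eq_zero_of_log_canonical P_swap _ _ _ (bracket_x_x i j) (bracket_x_x j k)
    (bracket_x_x k i)

theorem jacobiator_y_y_y (i j k : Fin m) : jacobiator P (y i) (y j) (y k) = 0 :=
  jacobiator_eq_zero_of_log_canonical P_swap _ _ _ (bracket_y_y i j) (bracket_y_y j k)
    (bracket_y_y k i)

theorem jacobiator_x_x_y (i j k : Fin m) : jacobiator P (x i) (x j) (y k) = 0 := by
  by_cases hkj : k = j
  · subst hkj
    by_cases hik : i = k
    · subst hik
      exact jacobiator_self_left P_swap _ _
    · exact jacobiator_x_x_y_self hik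
  by_cases hki : k = i
  · subst hki
    rw [jacobiator_swap P_swap, jacobiator_x_x_y_self (Ne.symm hkj), neg_zero]
  exact jacobiator_eq_zero_of_log_canonical P_swap _ _ _ (bracket_x_x i j)
    (bracket_x_y_of_ne (Ne.symm hkj)) (bracket_y_x_of_ne (Ne.symm hki))

theorem jacobiator_x_y_y (i j k : Fin m) : jacobiator P (x i) (y j) (y k) = 0 := by
  by_cases hji : j = i
  · subst hji
    by_cases hkj : k = j
    · subst hkj
      rw [jacobiator_rotate]
      exact jacobiator_self_left P_swap _ _
    · exact jacobiator_x_y_self_y (Ne.symm hkj)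
  by_cases hki : k = i
  · subst hki
    rw [← jacobiator_rotate, jacobiator_swap P_swap, jacobiator_x_y_self_y (Ne.symm hji),
      neg_zero]
  exact jacobiator_eq_zero_of_log_canonical P_swap _ _ _ (bracket_x_y_of_ne (Ne.symm hji))
    (bracket_y_y j k) (bracket_y_x_of_ne (Ne.symm hki))

theorem jacobiator_X_X_X (a b c : Idx m) : jacobiator P (X a) (X b) (X c) = 0 := by
  rcases a with i | i <;> rcases b with j | j <;> rcases c with k | k
  · exact jacobiator_x_x_x i j k
  · exact jacobiator_x_x_y i j k
  · rw [jacobiator_rotate, jacobiator_rotate]; exact jacobiator_x_x_y k i j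
  · exact jacobiator_x_y_y i j k
  · rw [jacobiator_rotate]; exact jacobiator_x_x_y j k i
  · rw [jacobiator_rotate]; exact jacobiator_x_y_y j k i
  · rw [jacobiator_rotate, jacobiator_rotate]; exact jacobiator_x_y_y k i j
  · exact jacobiator_y_y_y i j k

end StmtD

theorem jacobi_even_quantum_euclidean_general (N : ℕ)
    (f g h : MvPolynomial (StmtD.Idx (N - 1)) ℂ) :
    polyBracket StmtD.P f (polyBracket StmtD.P g h) +
      polyBracket StmtD.P g (polyBracket StmtD.P h f) +
      polyBracket StmtD.P h (polyBracket StmtD.P f g) = 0 :=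
  jacobiator_eq_zero_of_X StmtD.P_swap StmtD.jacobiator_X_X_X f g h

/-- For `N ≥ 2`, the bracket on `ℂ[x_2,…,x_N,y_2,…,y_N]` determined by
`{x_i,x_j} = (1/2)x_i x_j` (`i<j`), `{y_i,y_j} = -(1/2)y_i y_j` (`i<j`),
`{x_i,y_j} = (1/2)x_i y_j` (`i≠j`), and `{x_i,y_i} = -Σ_{l=i+1}^N x_l y_l`
satisfies the Jacobi identity, i.e. it is a Poisson bracket (the quasiclassical
limit of even-dimensional quantum Euclidean space). -/
theorem jacobi_even_quantum_euclidean (N : ℕ) (hN : 2 ≤ N)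
    (f g h : MvPolynomial (StmtD.Idx (N - 1)) ℂ) :
    polyBracket StmtD.P f (polyBracket StmtD.P g h) +
      polyBracket StmtD.P g (polyBracket StmtD.P h f) +
      polyBracket StmtD.P h (polyBracket StmtD.P f g) = 0 :=
  jacobi_even_quantum_euclidean_general N f g h
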